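/- arXiv:1411.5217 — 2 statements merged into one kernel-verified Lean document; each statement's English description precedes it below -/
import Mathlib

section
/- The function g(t) defined for t ∈ [0,1] by (1+g(t))/2 = ∫₀¹∫₀¹ (1 − ξ(1 + t r^{ν/δ} s^{μ/δ})) / ((1−ξ)(1 + t r^{ν/δ} s^{μ/δ})²) dr ds satisfies g(0) = 1 and the differential equation d/dt ( t^{δ/ν} (1+g(t))/2 ) = (δ²/(μν)) t^{δ/ν−1} ∫₀¹ (1 − ξ(1+st)) s^{δ/μ−1} / ((1−ξ)(1+st)²) ds. -/
/-!
Substituting `w = s ^ b` and then `v = r ^ a` turns the double integral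
`∫∫ f (x r^a s^b) dr ds` into `(a b)⁻¹ x^(-1/a) ∫₀ˣ W(u) u^(1/a - 1) du`, where
`W(y) = ∫₀¹ f(y w) w^(1/b - 1) dw`. Multiplying by `x^(1/a)` leaves a primitive, so the derivative
is given by the fundamental theorem of calculus; its hypotheses hold because `W` is bounded and,
being `y^(-1/b) ∫₀^y f(u) u^(1/b - 1) du`, continuous on `(0, ∞)`.
-/

open MeasureTheory Real Set intervalIntegral

/-- No integrability is assumed: this is a change of variables along a measurable bijection, so
both sides are junk `0` simultaneously. -/
theorem integral_zero_one_comp_rpow (φ : ℝ → ℝ) {q : ℝ} (hq : 0 < q) :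
    ∫ s in (0:ℝ)..1, φ (s ^ q) = q⁻¹ * ∫ w in (0:ℝ)..1, φ w * w ^ (q⁻¹ - 1) := by
  have key := integral_comp_rpow_Ioi_of_pos (g := (Ioc (0:ℝ) 1).indicator fun y => φ (y ^ q))
    (inv_pos.2 hq)
  have hIoc : Ioi (0:ℝ) ∩ Ioc 0 1 = Ioc 0 1 := inter_eq_right.2 Ioc_subset_Ioi_self
  have hcongr : EqOn (fun x => (q⁻¹ * x ^ (q⁻¹ - 1)) •
      (Ioc (0:ℝ) 1).indicator (fun y => φ (y ^ q)) (x ^ q⁻¹))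
      ((Ioc (0:ℝ) 1).indicator fun w => q⁻¹ * (φ w * w ^ (q⁻¹ - 1))) (Ioi 0) := by
    intro x (hx : 0 < x)
    have hmem : x ^ q⁻¹ ∈ Ioc (0:ℝ) 1 ↔ x ∈ Ioc (0:ℝ) 1 := by
      simp [hx, rpow_pos_of_pos hx, rpow_le_one_iff_of_pos hx, hq.le, hq.not_ge]
    by_cases h : x ∈ Ioc (0:ℝ) 1
    · simp only [smul_eq_mul, indicator_of_mem h, indicator_of_mem (hmem.2 h),
        ← rpow_mul hx.le, inv_mul_cancel₀ hq.ne', rpow_one]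
      ring
    · simp [indicator_of_notMem h, indicator_of_notMem (mt hmem.1 h)]
  rw [setIntegral_congr_fun measurableSet_Ioi hcongr, setIntegral_indicator measurableSet_Ioc,
    setIntegral_indicator measurableSet_Ioc, hIoc, MeasureTheory.integral_const_mul] at key
  rw [integral_of_le zero_le_one, integral_of_le zero_le_one, ← key]

theorem integral_zero_one_comp_mul_mul_rpow (ψ : ℝ → ℝ) (e : ℝ) {x : ℝ} (hx : 0 < x) :
    ∫ v in (0:ℝ)..1, ψ (x * v) * v ^ e = x ^ (-(e + 1)) * ∫ u in (0:ℝ)..x, ψ u * u ^ e := by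
  have hscale : ∀ v ∈ uIcc (0:ℝ) 1,
      ψ (x * v) * v ^ e = x ^ (-e) * (ψ (x * v) * (x * v) ^ e) := by
    intro v hv
    rw [uIcc_of_le zero_le_one] at hv
    rw [mul_rpow hx.le hv.1, rpow_neg hx.le]
    field_simp [(rpow_pos_of_pos hx e).ne']
  rw [integral_congr hscale, intervalIntegral.integral_const_mul,
    integral_comp_mul_left (fun u => ψ u * u ^ e) hx.ne', mul_zero, mul_one, smul_eq_mul,
    ← mul_assoc, ← rpow_neg_one, ← rpow_add hx]
  ring_nf

noncomputable def rpowWeightedIntegral (f : ℝ → ℝ) (κ y : ℝ) : ℝ :=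
  ∫ w in (0:ℝ)..1, f (y * w) * w ^ (κ - 1)

theorem rpowWeightedIntegral_eq {f : ℝ → ℝ} (κ : ℝ) {y : ℝ} (hy : 0 < y) :
    rpowWeightedIntegral f κ y = y ^ (-κ) * ∫ u in (0:ℝ)..y, f u * u ^ (κ - 1) := by
  rw [rpowWeightedIntegral, integral_zero_one_comp_mul_mul_rpow f _ hy, sub_add_cancel]

theorem abs_rpowWeightedIntegral_le {f : ℝ → ℝ} {C κ y : ℝ} (hfC : ∀ u ∈ Ioi (0:ℝ), |f u| ≤ C)
    (hκ : 0 < κ) (hy : 0 < y) : |rpowWeightedIntegral f κ y| ≤ C / κ := by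
  have hle : ∀ᵐ w ∂volume, w ∈ Ioc (0:ℝ) 1 →
      ‖f (y * w) * w ^ (κ - 1)‖ ≤ C * w ^ (κ - 1) := ae_of_all _ fun w hw => by
    rw [norm_mul, norm_of_nonneg (rpow_nonneg hw.1.le _)]
    exact mul_le_mul_of_nonneg_right (hfC _ (mul_pos hy hw.1)) (rpow_nonneg hw.1.le _)
  have hint : IntervalIntegrable (fun w => C * w ^ (κ - 1)) volume 0 1 :=
    (intervalIntegrable_rpow' (by linarith)).const_mul C
  refine (norm_integral_le_of_norm_le zero_le_one hle hint).trans_eq ?_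
  rw [intervalIntegral.integral_const_mul, integral_rpow (Or.inl (by linarith)), sub_add_cancel,
    one_rpow, zero_rpow hκ.ne', sub_zero]
  ring

theorem ContinuousOn.mul_rpow_Ioi {f : ℝ → ℝ} (hf : ContinuousOn f (Ioi 0)) (e : ℝ) :
    ContinuousOn (fun u => f u * u ^ e) (Ioi 0) :=
  hf.mul fun u hu => (continuousAt_rpow_const u e (Or.inl (ne_of_gt hu))).continuousWithinAt

theorem intervalIntegrable_mul_rpow {f : ℝ → ℝ} {C κ x : ℝ} (hf : ContinuousOn f (Ioi 0))
    (hfC : ∀ u ∈ Ioi (0:ℝ), |f u| ≤ C) (hκ : 0 < κ) (hx : 0 ≤ x) :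
    IntervalIntegrable (fun u => f u * u ^ (κ - 1)) volume 0 x := by
  refine ((intervalIntegrable_rpow' (r := κ - 1) (by linarith)).const_mul C).mono_fun' ?_ ?_
  · rw [uIoc_of_le hx]
    exact ((hf.mul_rpow_Ioi _).mono Ioc_subset_Ioi_self).aestronglyMeasurable measurableSet_Ioc
  · rw [uIoc_of_le hx]
    refine (ae_restrict_iff' measurableSet_Ioc).2 (ae_of_all _ fun u hu => ?_)
    show ‖f u * u ^ (κ - 1)‖ ≤ C * u ^ (κ - 1)
    rw [norm_mul, norm_of_nonneg (rpow_nonneg hu.1.le _)]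
    exact mul_le_mul_of_nonneg_right (hfC u hu.1) (rpow_nonneg hu.1.le _)

theorem hasDerivAt_integral_mul_rpow {f : ℝ → ℝ} {C κ t : ℝ} (hf : ContinuousOn f (Ioi 0))
    (hfC : ∀ u ∈ Ioi (0:ℝ), |f u| ≤ C) (hκ : 0 < κ) (ht : 0 < t) :
    HasDerivAt (fun x => ∫ u in (0:ℝ)..x, f u * u ^ (κ - 1)) (f t * t ^ (κ - 1)) t := by
  have hcont := hf.mul_rpow_Ioi (κ - 1)
  exact integral_hasDerivAt_right (intervalIntegrable_mul_rpow hf hfC hκ ht.le)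
    (hcont.stronglyMeasurableAtFilter isOpen_Ioi t ht)
    (hcont.continuousAt (isOpen_Ioi.mem_nhds ht))

theorem continuousOn_rpowWeightedIntegral {f : ℝ → ℝ} {C κ : ℝ} (hf : ContinuousOn f (Ioi 0))
    (hfC : ∀ u ∈ Ioi (0:ℝ), |f u| ≤ C) (hκ : 0 < κ) :
    ContinuousOn (rpowWeightedIntegral f κ) (Ioi 0) := by
  intro y (hy : 0 < y)
  have hP := (hasDerivAt_integral_mul_rpow hf hfC hκ hy).continuousAt
  have hEq : (fun y => y ^ (-κ) * ∫ u in (0:ℝ)..y, f u * u ^ (κ - 1)) =ᶠ[nhds y]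
      rpowWeightedIntegral f κ :=
    Filter.eventuallyEq_of_mem (isOpen_Ioi.mem_nhds hy) fun z hz =>
      (rpowWeightedIntegral_eq κ hz).symm
  exact (((continuousAt_rpow_const y _ (Or.inl hy.ne')).mul hP).congr hEq).continuousWithinAt

theorem rpow_mul_integral_integral_comp_rpow (f : ℝ → ℝ) {a b x : ℝ} (ha : 0 < a) (hb : 0 < b)
    (hx : 0 < x) :
    x ^ a⁻¹ * ∫ r in (0:ℝ)..1, ∫ s in (0:ℝ)..1, f (x * r ^ a * s ^ b) =
      (a * b)⁻¹ * ∫ u in (0:ℝ)..x, rpowWeightedIntegral f b⁻¹ u * u ^ (a⁻¹ - 1) := by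
  have hinner : (fun r => ∫ s in (0:ℝ)..1, f (x * r ^ a * s ^ b)) =
      fun r => b⁻¹ * rpowWeightedIntegral f b⁻¹ (x * r ^ a) := funext fun r =>
    integral_zero_one_comp_rpow (fun w => f (x * r ^ a * w)) hb
  have houter := integral_zero_one_comp_rpow (fun y => rpowWeightedIntegral f b⁻¹ (x * y)) ha
  rw [hinner, intervalIntegral.integral_const_mul, houter,
    integral_zero_one_comp_mul_mul_rpow _ _ hx, sub_add_cancel, rpow_neg hx.le]
  field_simp [(rpow_pos_of_pos hx a⁻¹).ne']

theorem hasDerivAt_rpow_mul_integral_integral_comp_rpow {f : ℝ → ℝ} {C a b t : ℝ}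
    (hf : ContinuousOn f (Ioi 0)) (hfC : ∀ u ∈ Ioi (0:ℝ), |f u| ≤ C) (ha : 0 < a) (hb : 0 < b)
    (ht : 0 < t) :
    HasDerivAt (fun x => x ^ a⁻¹ * ∫ r in (0:ℝ)..1, ∫ s in (0:ℝ)..1, f (x * r ^ a * s ^ b))
      ((a * b)⁻¹ * (rpowWeightedIntegral f b⁻¹ t * t ^ (a⁻¹ - 1))) t := by
  have hW := hasDerivAt_integral_mul_rpow
    (continuousOn_rpowWeightedIntegral hf hfC (inv_pos.2 hb))
    (fun u hu => abs_rpowWeightedIntegral_le hfC (inv_pos.2 hb) hu) (inv_pos.2 ha) ht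
  exact (hW.const_mul _).congr_of_eventuallyEq (Filter.eventuallyEq_of_mem
    (isOpen_Ioi.mem_nhds ht) fun x hx => rpow_mul_integral_integral_comp_rpow f ha hb hx)

theorem abs_one_sub_mul_div_mul_sq_le (ξ : ℝ) {u : ℝ} (hu : 0 ≤ u) :
    |(1 - ξ * (1 + u)) / ((1 - ξ) * (1 + u) ^ 2)| ≤ (1 + |ξ|) / |1 - ξ| := by
  have hpos : 0 < (1 + u) ^ 2 := by positivity
  have hnum : |1 - ξ * (1 + u)| ≤ (1 + |ξ|) * (1 + u) ^ 2 := by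
    have h1 : |1 - ξ * (1 + u)| ≤ 1 + |ξ| * (1 + u) := by
      simpa [abs_mul, abs_of_nonneg (by linarith : 0 ≤ 1 + u)] using abs_sub 1 (ξ * (1 + u))
    have h2 : 1 + u ≤ (1 + u) ^ 2 := by nlinarith
    nlinarith [mul_le_mul_of_nonneg_left h2 (abs_nonneg ξ)]
  rw [abs_div, abs_mul, abs_of_pos hpos, div_mul_eq_div_div_swap]
  exact div_le_div_of_nonneg_right ((div_le_iff₀ hpos).2 hnum) (abs_nonneg _)

theorem stmt_2_general (μ ν δ ξ : ℝ) (hμ : 0 < μ) (hν : 0 < ν) (hδ : 0 < δ)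
    (hξ1 : ξ < 1) (g : ℝ → ℝ)
    (hg : ∀ t ∈ Icc (0:ℝ) 1,
      (1 + g t) / 2 =
        ∫ r in (0:ℝ)..1, ∫ s in (0:ℝ)..1,
          (1 - ξ * (1 + t * r ^ (ν / δ) * s ^ (μ / δ))) /
            ((1 - ξ) * (1 + t * r ^ (ν / δ) * s ^ (μ / δ)) ^ 2)) :
    g 0 = 1 ∧
      ∀ t ∈ Ioo (0:ℝ) 1,
        HasDerivAt (fun x : ℝ => x ^ (δ / ν) * ((1 + g x) / 2))
          (δ ^ 2 / (μ * ν) * t ^ (δ / ν - 1) *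
            ∫ s in (0:ℝ)..1,
              (1 - ξ * (1 + s * t)) * s ^ (δ / μ - 1) / ((1 - ξ) * (1 + s * t) ^ 2)) t := by
  have hξ : 1 - ξ ≠ 0 := by linarith
  refine ⟨?_, fun t ht => ?_⟩
  · have h0 := hg 0 (left_mem_Icc.2 zero_le_one)
    simp only [zero_mul, add_zero, mul_one, one_pow, div_self hξ, intervalIntegral.integral_const,
      sub_zero, smul_eq_mul] at h0
    linarith
  set f : ℝ → ℝ := fun u => (1 - ξ * (1 + u)) / ((1 - ξ) * (1 + u) ^ 2)
  have hf : ContinuousOn f (Ioi 0) :=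
    ContinuousOn.div (by fun_prop) (by fun_prop) fun u (hu : 0 < u) =>
      mul_ne_zero hξ (by positivity)
  have hD := hasDerivAt_rpow_mul_integral_integral_comp_rpow hf
    (fun u hu => abs_one_sub_mul_div_mul_sq_le ξ (le_of_lt hu)) (div_pos hν hδ) (div_pos hμ hδ)
    ht.1
  rw [inv_div, inv_div] at hD
  refine (hD.congr_of_eventuallyEq (Filter.eventuallyEq_of_mem (isOpen_Ioo.mem_nhds ht)
    fun x hx => by rw [hg x (Ioo_subset_Icc_self hx)])).congr_deriv ?_
  have hW : rpowWeightedIntegral f (δ / μ) t = ∫ s in (0:ℝ)..1,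
      (1 - ξ * (1 + s * t)) * s ^ (δ / μ - 1) / ((1 - ξ) * (1 + s * t) ^ 2) :=
    integral_congr fun s _ => by simp only [f, mul_comm t s]; ring
  rw [hW, show (ν / δ * (μ / δ))⁻¹ = δ ^ 2 / (μ * ν) by field_simp]
  ring

theorem stmt_2 (μ ν δ ξ : ℝ) (hμ : 0 < μ) (hν : 0 < ν) (hδ : 0 < δ)
    (hξ0 : 0 ≤ ξ) (hξ1 : ξ < 1) (g : ℝ → ℝ)
    (hg : ∀ t ∈ Icc (0:ℝ) 1,
      (1 + g t) / 2 =
        ∫ r in (0:ℝ)..1, ∫ s in (0:ℝ)..1,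
          (1 - ξ * (1 + t * r ^ (ν / δ) * s ^ (μ / δ))) /
            ((1 - ξ) * (1 + t * r ^ (ν / δ) * s ^ (μ / δ)) ^ 2)) :
    g 0 = 1 ∧
      ∀ t ∈ Ioo (0:ℝ) 1,
        HasDerivAt (fun x : ℝ => x ^ (δ / ν) * ((1 + g x) / 2))
          (δ ^ 2 / (μ * ν) * t ^ (δ / ν - 1) *
            ∫ s in (0:ℝ)..1,
              (1 - ξ * (1 + s * t)) * s ^ (δ / μ - 1) / ((1 - ξ) * (1 + s * t) ^ 2)) t :=
  stmt_2_general μ ν δ ξ hμ hν hδ hξ1 g hg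
end

section
/- For μ, ν, δ > 0 and 0 ≤ ξ < 1, the function g with (1+g(t))/2 = ∫₀¹∫₀¹ (1 − ξ(1 + t r^{ν/δ} s^{μ/δ})) / ((1−ξ)(1 + t r^{ν/δ} s^{μ/δ})²) dr ds has the power series expansion g(t) = 1 + (2δ²/(1−ξ)) Σ_{n≥1} (−1)ⁿ (n + 1 − ξ) tⁿ / ((nν + δ)(nμ + δ)) for t ∈ [0,1). -/
/-! Expand the integrand as a power series in `u = t r^{ν/δ} s^{μ/δ}`:
`(1 - ξ(1 + u)) / ((1 - ξ)(1 + u)²) = Σ (n + 1 - ξ)/(1 - ξ) · (-u)ⁿ`. For `t < 1` the coefficients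
are absolutely summable and dominate the terms on `[0, 1]²`, so the double integral can be taken
term by term, with `∫₀¹∫₀¹ r^{nν/δ} s^{nμ/δ} dr ds = δ² / ((nν + δ)(nμ + δ))`; the `n = 0` term is
the leading `1`. -/

open MeasureTheory Real Set

theorem hasSum_add_one_sub_mul_geometric {x : ℝ} (hx : |x| < 1) (ξ : ℝ) :
    HasSum (fun n : ℕ => ((n : ℝ) + 1 - ξ) * x ^ n) ((1 - ξ * (1 - x)) / (1 - x) ^ 2) := by
  have hx1 : 1 - x ≠ 0 := by linarith [le_abs_self x]
  have hsum := (hasSum_coe_mul_geometric_of_norm_lt_one hx).add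
    ((hasSum_geometric_of_abs_lt_one hx).mul_left (1 - ξ))
  have hterm : (fun n : ℕ => ((n : ℝ) + 1 - ξ) * x ^ n) =
      fun n : ℕ => (n : ℝ) * x ^ n + (1 - ξ) * x ^ n := by
    ext n; ring
  have hval : (1 - ξ * (1 - x)) / (1 - x) ^ 2 = x / (1 - x) ^ 2 + (1 - ξ) * (1 - x)⁻¹ := by
    field_simp; ring
  rwa [hterm, hval]

theorem intervalIntegral_mul_rpow_zero_one (a : ℝ) {e : ℝ} (he : 0 ≤ e) :
    ∫ s in (0 : ℝ)..1, a * s ^ e = a / (e + 1) := by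
  rw [intervalIntegral.integral_const_mul, integral_rpow (Or.inl (by linarith)), one_rpow,
    zero_rpow (by linarith)]
  ring

theorem abs_mul_rpow_le_abs {a s e : ℝ} (hs₀ : 0 ≤ s) (hs₁ : s ≤ 1) (he : 0 ≤ e) :
    |a * s ^ e| ≤ |a| := by
  rw [abs_mul, abs_of_nonneg (rpow_nonneg hs₀ e)]
  exact mul_le_of_le_one_right (abs_nonneg a) (rpow_le_one hs₀ hs₁ he)

theorem hasSum_intervalIntegral_of_hasSum_mul_rpow {a e : ℕ → ℝ} (ha : Summable a)
    (he : ∀ n, 0 ≤ e n) {f : ℝ → ℝ}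
    (hf : ∀ s ∈ Ioc (0 : ℝ) 1, HasSum (fun n => a n * s ^ e n) (f s)) :
    HasSum (fun n => a n / (e n + 1)) (∫ s in (0 : ℝ)..1, f s) := by
  have hIoc : uIoc (0 : ℝ) 1 = Ioc 0 1 := uIoc_of_le zero_le_one
  have key := intervalIntegral.hasSum_integral_of_dominated_convergence (μ := volume)
    (F := fun n s => a n * s ^ e n) (fun n _ => |a n|)
    (fun n => (continuous_const.mul (continuous_rpow_const (he n))).aestronglyMeasurable)
    (fun n => ae_of_all _ fun s hs => by
      rw [hIoc] at hs
      exact abs_mul_rpow_le_abs hs.1.le hs.2 (he n))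
    (ae_of_all _ fun _ _ => summable_abs_iff.mpr ha) intervalIntegrable_const
    (ae_of_all _ fun s hs => hf s (hIoc ▸ hs))
  simpa only [intervalIntegral_mul_rpow_zero_one _ (he _)] using key

theorem hasSum_intervalIntegral_intervalIntegral_of_hasSum {c : ℕ → ℝ} (hc : Summable c)
    {α β : ℝ} (hα : 0 ≤ α) (hβ : 0 ≤ β) {f : ℝ → ℝ → ℝ}
    (hf : ∀ r ∈ Ioc (0 : ℝ) 1, ∀ s ∈ Ioc (0 : ℝ) 1,
      HasSum (fun n : ℕ => c n * r ^ (α * n) * s ^ (β * n)) (f r s)) :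
    HasSum (fun n : ℕ => c n / ((α * n + 1) * (β * n + 1)))
      (∫ r in (0 : ℝ)..1, ∫ s in (0 : ℝ)..1, f r s) := by
  have hαn (n : ℕ) : 0 ≤ α * n := by positivity
  have hβn (n : ℕ) : 0 ≤ β * n := by positivity
  have hcβ : Summable fun n : ℕ => c n / (β * n + 1) := by
    refine Summable.of_norm_bounded (summable_abs_iff.mpr hc) fun n => ?_
    rw [norm_div, norm_of_nonneg (by linarith [hβn n] : (0 : ℝ) ≤ β * n + 1)]
    exact div_le_self (norm_nonneg _) (by linarith [hβn n])
  have hinner : ∀ r ∈ Ioc (0 : ℝ) 1, HasSum (fun n : ℕ => c n / (β * n + 1) * r ^ (α * n))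
      (∫ s in (0 : ℝ)..1, f r s) := by
    intro r hr
    have hcr : Summable fun n : ℕ => c n * r ^ (α * n) :=
      Summable.of_norm_bounded (summable_abs_iff.mpr hc) fun n =>
        abs_mul_rpow_le_abs hr.1.le hr.2 (hαn n)
    convert hasSum_intervalIntegral_of_hasSum_mul_rpow hcr hβn (hf r hr) using 1
    ext n; ring
  convert hasSum_intervalIntegral_of_hasSum_mul_rpow hcβ hαn hinner using 1
  ext n; field_simp

theorem hasSum_integrand (ξ : ℝ) {t α β r s : ℝ} (ht₀ : 0 ≤ t) (ht₁ : t < 1) (hα : 0 ≤ α)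
    (hβ : 0 ≤ β) (hr₀ : 0 ≤ r) (hr₁ : r ≤ 1) (hs₀ : 0 ≤ s) (hs₁ : s ≤ 1) :
    HasSum (fun n : ℕ => ((n : ℝ) + 1 - ξ) * (-t) ^ n / (1 - ξ) * r ^ (α * n) * s ^ (β * n))
      ((1 - ξ * (1 + t * r ^ α * s ^ β)) / ((1 - ξ) * (1 + t * r ^ α * s ^ β) ^ 2)) := by
  have hrα : r ^ α ≤ 1 := rpow_le_one hr₀ hr₁ hα
  have hsβ : s ^ β ≤ 1 := rpow_le_one hs₀ hs₁ hβ
  have hu : |-(t * r ^ α * s ^ β)| < 1 := by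
    rw [abs_neg, abs_of_nonneg (by positivity)]
    calc t * r ^ α * s ^ β ≤ t * 1 * 1 := by gcongr
      _ < 1 := by linarith
  have h := (hasSum_add_one_sub_mul_geometric hu ξ).div_const (1 - ξ)
  rw [sub_neg_eq_add, div_div, mul_comm ((1 + _) ^ 2)] at h
  refine h.congr_fun fun n => ?_
  rw [rpow_mul_natCast hr₀, rpow_mul_natCast hs₀]
  ring

theorem stmt_6_general (μ ν δ ξ : ℝ) (hμ : 0 < μ) (hν : 0 < ν) (hδ : 0 < δ)
    (hξ1 : ξ < 1) (g : ℝ → ℝ)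
    (hg : ∀ t ∈ Ico (0:ℝ) 1,
      (1 + g t) / 2 =
        ∫ r in (0:ℝ)..1, ∫ s in (0:ℝ)..1,
          (1 - ξ * (1 + t * r ^ (ν / δ) * s ^ (μ / δ))) /
            ((1 - ξ) * (1 + t * r ^ (ν / δ) * s ^ (μ / δ)) ^ 2)) :
    ∀ t ∈ Ico (0:ℝ) 1,
      g t = 1 + (2 * δ ^ 2 / (1 - ξ)) *
          ∑' n : ℕ, (-1 : ℝ) ^ (n + 1) * ((n : ℝ) + 2 - ξ) * t ^ (n + 1) /
            ((((n : ℝ) + 1) * ν + δ) * (((n : ℝ) + 1) * μ + δ)) := by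
  rintro t ⟨ht₀, ht₁⟩
  have hα : 0 ≤ ν / δ := by positivity
  have hβ : 0 ≤ μ / δ := by positivity
  have hξ : 1 - ξ ≠ 0 := by linarith
  have ht : |-t| < 1 := by rwa [abs_neg, abs_of_nonneg ht₀]
  have hc := (hasSum_add_one_sub_mul_geometric ht ξ).summable.div_const (1 - ξ)
  have hI := hasSum_intervalIntegral_intervalIntegral_of_hasSum hc hα hβ fun r hr s hs =>
    hasSum_integrand ξ ht₀ ht₁ hα hβ hr.1.le hr.2 hs.1.le hs.2
  rw [← hg t ⟨ht₀, ht₁⟩] at hI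
  set term : ℕ → ℝ := fun n => (-1 : ℝ) ^ n * ((n : ℝ) + 1 - ξ) * t ^ n /
    (((n : ℝ) * ν + δ) * ((n : ℝ) * μ + δ))
  have hterm : HasSum term ((1 - ξ) / δ ^ 2 * ((1 + g t) / 2)) := by
    refine (hI.mul_left ((1 - ξ) / δ ^ 2)).congr_fun fun n => ?_
    have : (n : ℝ) * ν + δ ≠ 0 := by positivity
    have : (n : ℝ) * μ + δ ≠ 0 := by positivity
    simp only [term, neg_pow t]
    field_simp
  have hshift := (hasSum_nat_add_iff' 1).mpr hterm
  rw [tsum_congr fun n => (by simp only [term]; push_cast; ring : _ = term (n + 1)),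
    hshift.tsum_eq]
  simp only [Finset.range_one, Finset.sum_singleton, term]
  field_simp
  ring

theorem stmt_6 (μ ν δ ξ : ℝ) (hμ : 0 < μ) (hν : 0 < ν) (hδ : 0 < δ)
    (hξ0 : 0 ≤ ξ) (hξ1 : ξ < 1) (g : ℝ → ℝ)
    (hg : ∀ t ∈ Ico (0:ℝ) 1,
      (1 + g t) / 2 =
        ∫ r in (0:ℝ)..1, ∫ s in (0:ℝ)..1,
          (1 - ξ * (1 + t * r ^ (ν / δ) * s ^ (μ / δ))) /
            ((1 - ξ) * (1 + t * r ^ (ν / δ) * s ^ (μ / δ)) ^ 2)) :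
    ∀ t ∈ Ico (0:ℝ) 1,
      g t = 1 + (2 * δ ^ 2 / (1 - ξ)) *
          ∑' n : ℕ, (-1 : ℝ) ^ (n + 1) * ((n : ℝ) + 2 - ξ) * t ^ (n + 1) /
            ((((n : ℝ) + 1) * ν + δ) * (((n : ℝ) + 1) * μ + δ)) :=
  stmt_6_general μ ν δ ξ hμ hν hδ hξ1 g hg
end
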